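/- arXiv:2510.10170 — 3 statements merged into one kernel-verified Lean document; each statement's English description precedes it below -/
import Mathlib

section
/- Let R be a commutative ring, S a multiplicative subset of R, and P a u-S-pseudo-projective R-module such that the image of every R-endomorphism of P is a direct summand of P. Then the endomorphism ring End_R(P) is S-von Neumann regular: for every R-endomorphism e of P there exist s ∈ S and an R-endomorphism q of P such that s·e = e ∘ q ∘ e. -/
/-!  Definitions for uniformly-S-pseudo-projective modules
(M. Adarbeh, M. Saleh, "Uniformly-S-pseudo-projective modules"). -/

universe u v w

/-- `S` is a multiplicative subset of the commutative ring `R`: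
`1 ∈ S`, `0 ∉ S`, and `S` is closed under multiplication. -/
def IsMultSubset {R : Type u} [CommRing R] (S : Set R) : Prop :=
  1 ∈ S ∧ (0 : R) ∉ S ∧ ∀ ⦃a b : R⦄, a ∈ S → b ∈ S → a * b ∈ S

/-- An `R`-module `T` is `u`-`S`-torsion if some `s ∈ S` annihilates it. -/
def IsUSTorsion {R : Type u} [CommRing R] (S : Set R) (T : Type v) [AddCommGroup T]
    [Module R T] : Prop :=
  ∃ s ∈ S, ∀ t : T, s • t = 0

/-- `f` is a `u`-`S`-monomorphism: its kernel is `u`-`S`-torsion. -/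
def IsUSMono {R : Type u} [CommRing R] (S : Set R) {M : Type v} {N : Type w}
    [AddCommGroup M] [Module R M] [AddCommGroup N] [Module R N] (f : M →ₗ[R] N) : Prop :=
  ∃ s ∈ S, ∀ m ∈ LinearMap.ker f, s • m = (0 : M)

/-- `f` is a `u`-`S`-epimorphism: its cokernel is `u`-`S`-torsion. -/
def IsUSEpi {R : Type u} [CommRing R] (S : Set R) {M : Type v} {N : Type w}
    [AddCommGroup M] [Module R M] [AddCommGroup N] [Module R N] (f : M →ₗ[R] N) : Prop :=
  ∃ s ∈ S, ∀ n : N, s • n ∈ LinearMap.range f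

/-- `f` is a `u`-`S`-isomorphism: both a `u`-`S`-monomorphism and a `u`-`S`-epimorphism. -/
def IsUSIso {R : Type u} [CommRing R] (S : Set R) {M : Type v} {N : Type w}
    [AddCommGroup M] [Module R M] [AddCommGroup N] [Module R N] (f : M →ₗ[R] N) : Prop :=
  IsUSMono S f ∧ IsUSEpi S f

/-- `P` is `u`-`S`-pseudo-projective: for every submodule `K` of `P` there is `s ∈ S` such that
every `u`-`S`-epimorphism `f : P → P/K` satisfies `s • f = π_K ∘ g` for some endomorphism
`g` of `P`. -/
def IsUSPseudoProjective {R : Type u} [CommRing R] (S : Set R) (P : Type v)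
    [AddCommGroup P] [Module R P] : Prop :=
  ∀ K : Submodule R P, ∃ s ∈ S, ∀ f : P →ₗ[R] P ⧸ K, IsUSEpi S f →
    ∃ g : P →ₗ[R] P, s • f = K.mkQ.comp g

/-- `M` is `u`-`S`-quasi-projective. -/
def IsUSQuasiProjective {R : Type u} [CommRing R] (S : Set R) (M : Type v)
    [AddCommGroup M] [Module R M] : Prop :=
  ∀ K : Submodule R M, ∃ s ∈ S, ∀ f : M →ₗ[R] M ⧸ K,
    ∃ g : M →ₗ[R] M, s • f = K.mkQ.comp g

/-- `Q` is `u`-`S`-projective (test modules in `Type v₁`). -/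
def IsUSProjective.{u₁, v₁, w₁} {R : Type u₁} [CommRing R] (S : Set R) (Q : Type w₁)
    [AddCommGroup Q] [Module R Q] : Prop :=
  ∀ (B C : Type v₁) [AddCommGroup B] [AddCommGroup C] [Module R B] [Module R C]
    (g : B →ₗ[R] C), IsUSEpi S g →
      ∃ s ∈ S, ∀ h : Q →ₗ[R] C, ∃ h' : Q →ₗ[R] B, s • h = g.comp h'

/-- `M` is `u`-`S`-injective (test modules in `Type v₁`). -/
def IsUSInjective.{u₁, v₁, w₁} {R : Type u₁} [CommRing R] (S : Set R) (M : Type w₁)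
    [AddCommGroup M] [Module R M] : Prop :=
  ∀ (A B : Type v₁) [AddCommGroup A] [AddCommGroup B] [Module R A] [Module R B]
    (f : A →ₗ[R] B), IsUSMono S f →
      ∃ s ∈ S, ∀ h : A →ₗ[R] M, ∃ h' : B →ₗ[R] M, s • h = h'.comp f

/-- `E` is `u`-`S`-pseudo-injective. -/
def IsUSPseudoInjective {R : Type u} [CommRing R] (S : Set R) (E : Type v)
    [AddCommGroup E] [Module R E] : Prop :=
  ∀ K : Submodule R E, ∃ s ∈ S, ∀ f : ↥K →ₗ[R] E, IsUSMono S f →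
    ∃ g : E →ₗ[R] E, g.comp K.subtype = s • f

/-- The sequence `0 → A →f B →g C → 0` is short `u`-`S`-exact. -/
def IsShortUSExact {R : Type u} [CommRing R] (S : Set R) {A B C : Type v}
    [AddCommGroup A] [Module R A] [AddCommGroup B] [Module R B] [AddCommGroup C] [Module R C]
    (f : A →ₗ[R] B) (g : B →ₗ[R] C) : Prop :=
  IsUSMono S f ∧ IsUSEpi S g ∧
    ∃ s ∈ S, (∀ x ∈ LinearMap.ker g, s • x ∈ LinearMap.range f) ∧
      (∀ x ∈ LinearMap.range f, s • x ∈ LinearMap.ker g)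

/-- The short `u`-`S`-exact sequence `0 → A →f B →g C → 0` is `u`-`S`-split:
some multiple `s • 1_A` of the identity factors back through `f`. -/
def IsUSSplitSeq {R : Type u} [CommRing R] (S : Set R) {A B : Type v}
    [AddCommGroup A] [Module R A] [AddCommGroup B] [Module R B] (f : A →ₗ[R] B) : Prop :=
  ∃ s ∈ S, ∃ f' : B →ₗ[R] A, f'.comp f = s • (LinearMap.id : A →ₗ[R] A)

/-- `M` is a `u`-`S`-semisimple module (test sequences with modules in `Type v₁`). -/
def IsUSSemisimpleModule.{u₁, v₁} {R : Type u₁} [CommRing R] (S : Set R) (M : Type v₁)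
    [AddCommGroup M] [Module R M] : Prop :=
  ∀ (A C : Type v₁) [AddCommGroup A] [AddCommGroup C] [Module R A] [Module R C]
    (f : A →ₗ[R] M) (g : M →ₗ[R] C), IsShortUSExact S f g → IsUSSplitSeq S f

/-- `R` is a `u`-`S`-semisimple ring: every free `R`-module is `u`-`S`-semisimple. -/
def IsUSSemisimpleRing.{u₁, v₁} {R : Type u₁} [CommRing R] (S : Set R) : Prop :=
  ∀ (F : Type v₁) [AddCommGroup F] [Module R F], Module.Free R F →
    IsUSSemisimpleModule.{u₁, v₁} S F

/-- A submodule `N` of `M` is a `u`-`S`-direct summand of `M` if there is an `R`-module `N'`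
and a `u`-`S`-isomorphism between `M` and `N ⊕ N'`. -/
def IsUSDirectSummand {R : Type u} [CommRing R] (S : Set R) {M : Type v}
    [AddCommGroup M] [Module R M] (N : Submodule R M) : Prop :=
  ∃ (N' : ModuleCat.{v} R) (h : M →ₗ[R] (↥N × ↥N')), IsUSIso S h

/-- `A` is `u`-`S`-projective relative to `B`. -/
def IsUSProjectiveRel {R : Type u} [CommRing R] (S : Set R) (A : Type v) (B : Type w)
    [AddCommGroup A] [Module R A] [AddCommGroup B] [Module R B] : Prop :=
  ∀ K : Submodule R B, ∃ s ∈ S, ∀ f : A →ₗ[R] B ⧸ K,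
    ∃ h : A →ₗ[R] B, s • f = K.mkQ.comp h

/-! Writing `K = ker e`, a complement of `range e` gives a projection `P → range e ≅ P ⧸ K`,
a surjection `f` with `f ∘ e = π_K`. Pseudo-projectivity lifts `s • f` to an endomorphism `g`
with `π_K ∘ g = s • f`; composing with `e` gives `π_K ∘ g ∘ e = s • π_K`, and since `e` factors
through `π_K` this is `e ∘ g ∘ e = s • e`. -/

theorem isUSEpi_of_surjective {R : Type u} [CommRing R] {S : Set R} (hS : (1 : R) ∈ S)
    {M : Type v} {N : Type w} [AddCommGroup M] [Module R M] [AddCommGroup N] [Module R N]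
    {f : M →ₗ[R] N} (hf : Function.Surjective f) : IsUSEpi S f :=
  ⟨1, hS, fun n => (one_smul R n).symm ▸ LinearMap.mem_range.2 (hf n)⟩

namespace LinearMap

variable {R : Type u} [CommRing R] {M : Type v} {N : Type w}
  [AddCommGroup M] [Module R M] [AddCommGroup N] [Module R N]

theorem exists_comp_eq_mkQ_of_isCompl_range {e : M →ₗ[R] N} {A : Submodule R N}
    (hA : IsCompl (range e) A) : ∃ f : N →ₗ[R] M ⧸ ker e, f ∘ₗ e = (ker e).mkQ :=
  ⟨e.quotKerEquivRange.symm.toLinearMap ∘ₗ (range e).projectionOnto A hA, by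
    ext x
    simp [Submodule.projectionOnto_apply_left hA ⟨e x, mem_range_self e x⟩]⟩

theorem comp_comp_eq_smul_of_mkQ_comp_comp {e : M →ₗ[R] N} {g : N →ₗ[R] M} {s : R}
    (h : (ker e).mkQ ∘ₗ g ∘ₗ e = s • (ker e).mkQ) : e ∘ₗ g ∘ₗ e = s • e := by
  have he : (ker e).liftQ e le_rfl ∘ₗ (ker e).mkQ = e := (ker e).liftQ_mkQ e le_rfl
  calc e ∘ₗ g ∘ₗ e = ((ker e).liftQ e le_rfl ∘ₗ (ker e).mkQ) ∘ₗ g ∘ₗ e := by rw [he]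
    _ = (ker e).liftQ e le_rfl ∘ₗ ((ker e).mkQ ∘ₗ g ∘ₗ e) := by simp only [comp_assoc]
    _ = s • e := by rw [h, comp_smul, he]

end LinearMap

/-- If `P` is `u`-`S`-pseudo-projective and the image of every endomorphism of `P` is a direct
summand of `P`, then `End_R(P)` is `S`-von Neumann regular: for every endomorphism `e` there
are `s ∈ S` and an endomorphism `q` with `s • e = e ∘ q ∘ e`. -/
theorem endRing_sVonNeumannRegular_of_uSPseudoProjective
    {R : Type u} [CommRing R] (S : Set R) (hS : IsMultSubset S)
    {P : Type v} [AddCommGroup P] [Module R P] (hP : IsUSPseudoProjective S P)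
    (h : ∀ e : P →ₗ[R] P, ∃ A' : Submodule R P, IsCompl (LinearMap.range e) A') :
    ∀ e : P →ₗ[R] P, ∃ s ∈ S, ∃ q : P →ₗ[R] P, s • e = (e.comp q).comp e := by
  intro e
  obtain ⟨A', hA'⟩ := h e
  obtain ⟨f, hfe⟩ := LinearMap.exists_comp_eq_mkQ_of_isCompl_range hA'
  have hf : Function.Surjective f := .of_comp (g := e) <| by
    rw [← LinearMap.coe_comp, hfe]; exact (LinearMap.ker e).mkQ_surjective
  obtain ⟨s, hs, hlift⟩ := hP (LinearMap.ker e)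
  obtain ⟨g, hg⟩ := hlift f (isUSEpi_of_surjective hS.1 hf)
  refine ⟨s, hs, g, (LinearMap.comp_comp_eq_smul_of_mkQ_comp_comp ?_).symm⟩
  rw [← LinearMap.comp_assoc, ← hg, LinearMap.smul_comp, hfe]
end

section
/- Let R be a commutative ring, S a multiplicative subset of R, and A, B R-modules. If A ⊕ B is u-S-pseudo-projective, then A is u-S-projective relative to B; concretely, for every submodule K of B there exists s ∈ S such that for every R-homomorphism f : A → B/K there is an R-homomorphism h : A → B with s·f = π_K ∘ h, where π_K : B → B/K is the quotient map. Symmetrically, B is u-S-projective relative to A. -/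
/-!  Definitions for uniformly-S-pseudo-projective modules
(M. Adarbeh, M. Saleh, "Uniformly-S-pseudo-projective modules"). -/

universe u v w

section

variable {R : Type u} [CommRing R] {S : Set R}

theorem IsUSEpi.of_surjective (hS : 1 ∈ S) {M : Type v} {N : Type w} [AddCommGroup M]
    [Module R M] [AddCommGroup N] [Module R N] {f : M →ₗ[R] N} (hf : Function.Surjective f) :
    IsUSEpi S f :=
  ⟨1, hS, fun n => by simpa only [one_smul] using LinearMap.mem_range.2 (hf n)⟩

theorem IsUSEpi.comp_surjective {M N P : Type*} [AddCommGroup M] [Module R M]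
    [AddCommGroup N] [Module R N] [AddCommGroup P] [Module R P] {f : N →ₗ[R] P}
    (hf : IsUSEpi S f) {g : M →ₗ[R] N} (hg : Function.Surjective g) :
    IsUSEpi S (f ∘ₗ g) := by
  rw [IsUSEpi, LinearMap.range_comp_of_range_eq_top f (LinearMap.range_eq_top.2 hg)]
  exact hf

theorem IsUSEpi.linearEquiv_comp {M N P : Type*} [AddCommGroup M] [Module R M]
    [AddCommGroup N] [Module R N] [AddCommGroup P] [Module R P] {f : M →ₗ[R] N}
    (hf : IsUSEpi S f) (e : N ≃ₗ[R] P) : IsUSEpi S (e.toLinearMap ∘ₗ f) := by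
  obtain ⟨s, hs, hsf⟩ := hf
  refine ⟨s, hs, fun p => ?_⟩
  obtain ⟨m, hm⟩ := hsf (e.symm p)
  exact ⟨m, by simp [hm]⟩

theorem IsUSPseudoProjective.exists_lift_of_surjective {P : Type v} {Q : Type w}
    [AddCommGroup P] [Module R P] [AddCommGroup Q] [Module R Q]
    (hP : IsUSPseudoProjective S P) {q : P →ₗ[R] Q} (hq : Function.Surjective q) :
    ∃ s ∈ S, ∀ f : P →ₗ[R] Q, IsUSEpi S f → ∃ g : P →ₗ[R] P, s • f = q ∘ₗ g := by
  let e := q.quotKerEquivOfSurjective hq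
  obtain ⟨s, hs, hlift⟩ := hP (LinearMap.ker q)
  refine ⟨s, hs, fun f hf => ?_⟩
  obtain ⟨g, hg⟩ := hlift _ (hf.linearEquiv_comp e.symm)
  refine ⟨g, ?_⟩
  have hqe : q = e.toLinearMap ∘ₗ (LinearMap.ker q).mkQ := by ext; rfl
  rw [hqe, LinearMap.comp_assoc, ← hg, LinearMap.comp_smul, ← LinearMap.comp_assoc]
  simp

theorem IsUSPseudoProjective.of_linearEquiv {P P' : Type v} [AddCommGroup P] [Module R P]
    [AddCommGroup P'] [Module R P'] (hP : IsUSPseudoProjective S P) (e : P ≃ₗ[R] P') :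
    IsUSPseudoProjective S P' := by
  intro K
  obtain ⟨s, hs, hlift⟩ := hP.exists_lift_of_surjective
    (q := K.mkQ ∘ₗ e.toLinearMap) (K.mkQ_surjective.comp e.surjective)
  refine ⟨s, hs, fun f hf => ?_⟩
  obtain ⟨g, hg⟩ := hlift _ (hf.comp_surjective e.surjective)
  refine ⟨e.toLinearMap ∘ₗ g ∘ₗ e.symm.toLinearMap, ?_⟩
  ext x
  simpa using LinearMap.congr_fun hg (e.symm x)

/-- Given `f : A → B/K`, lift the surjection `(a, b) ↦ (a, π b + f a)` along `1 × π`
and read off the `B`-component on `A × 0`. -/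
theorem IsUSProjectiveRel.of_prod_left (hS : 1 ∈ S) {A B : Type v} [AddCommGroup A]
    [Module R A] [AddCommGroup B] [Module R B] (hAB : IsUSPseudoProjective S (A × B)) :
    IsUSProjectiveRel S A B := by
  intro K
  have hq : Function.Surjective (LinearMap.id.prodMap K.mkQ : A × B →ₗ[R] A × (B ⧸ K)) :=
    Function.surjective_id.prodMap K.mkQ_surjective
  obtain ⟨s, hs, hlift⟩ := hAB.exists_lift_of_surjective hq
  refine ⟨s, hs, fun f => ?_⟩
  let F : A × B →ₗ[R] A × (B ⧸ K) :=
    (LinearMap.fst R A B).prod (K.mkQ ∘ₗ LinearMap.snd R A B + f ∘ₗ LinearMap.fst R A B)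
  have hF : Function.Surjective F := by
    rintro ⟨a, c⟩
    obtain ⟨b, hb⟩ := K.mkQ_surjective (c - f a)
    exact ⟨(a, b), by simp [F, hb]⟩
  obtain ⟨g, hg⟩ := hlift F (IsUSEpi.of_surjective hS hF)
  refine ⟨LinearMap.snd R A B ∘ₗ g ∘ₗ LinearMap.inl R A B, ?_⟩
  ext a
  simpa [F] using congr_arg Prod.snd (LinearMap.congr_fun hg (a, 0))

end

/-- If `A ⊕ B` is `u`-`S`-pseudo-projective, then `A` is `u`-`S`-projective relative to `B`
and `B` is `u`-`S`-projective relative to `A`. -/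
theorem uSProjectiveRel_of_prod_uSPseudoProjective
    {R : Type u} [CommRing R] (S : Set R) (hS : IsMultSubset S)
    {A B : Type v} [AddCommGroup A] [Module R A] [AddCommGroup B] [Module R B]
    (hAB : IsUSPseudoProjective S (A × B)) :
    IsUSProjectiveRel S A B ∧ IsUSProjectiveRel S B A :=
  ⟨.of_prod_left hS.1 hAB, .of_prod_left hS.1 (hAB.of_linearEquiv (LinearEquiv.prodComm R A B))⟩
end

section
/- Let R be a commutative ring and S a multiplicative subset of R. Then the following statements are equivalent: (1) every u-S-quasi-projective R-module is u-S-projective; (2) every direct sum of two u-S-quasi-projective R-modules is u-S-projective; (3) every direct sum of two u-S-quasi-projective R-modules is u-S-quasi-projective. -/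
/-!  Definitions for uniformly-S-pseudo-projective modules
(M. Adarbeh, M. Saleh, "Uniformly-S-pseudo-projective modules"). -/

universe u v w

/-
u-S-projectivity passes to direct sums of two modules and to their summands, and implies
u-S-quasi-projectivity; with `M ≅ M × 0` this gives (1) ⇔ (2) and (1) ⇒ (3).
For (3) ⇒ (1): if `M × N` is u-S-quasi-projective, then `M` is u-S-projective relative to `N`,
which yields uniform lifts of `M` along any u-S-epimorphism `B → C` once `B` is a quotient of `N`.
Every `B` is such a quotient of a u-S-quasi-projective `N`, namely of a direct sum of copies of the
cyclic module `R ⧸ ann B`, all of whose quotients are again `R ⧸ ann B`-modules.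
-/

open Submodule LinearMap

section

variable {R : Type u} [CommRing R] {S : Set R}

theorem IsUSEpi.comp_surjective_s17 {A : Type v} {B : Type w} {C : Type*} [AddCommGroup A]
    [Module R A] [AddCommGroup B] [Module R B] [AddCommGroup C] [Module R C]
    {g : B →ₗ[R] C} (hg : IsUSEpi S g) {q : A →ₗ[R] B} (hq : Function.Surjective q) :
    IsUSEpi S (g ∘ₗ q) := by
  obtain ⟨s, hs, hsg⟩ := hg
  refine ⟨s, hs, fun c => ?_⟩
  obtain ⟨b, hb⟩ := hsg c
  obtain ⟨a, rfl⟩ := hq b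
  exact ⟨a, hb⟩

theorem isUSEpi_of_surjective_s17 {B : Type v} {C : Type w} [AddCommGroup B] [Module R B]
    [AddCommGroup C] [Module R C] (h1 : (1 : R) ∈ S) {g : B →ₗ[R] C}
    (hg : Function.Surjective g) : IsUSEpi S g :=
  ⟨1, h1, fun c => by simpa using hg c⟩

theorem IsUSProjectiveRel.exists_lift {M : Type v} {B : Type w} {C : Type*}
    [AddCommGroup M] [Module R M] [AddCommGroup B] [Module R B] [AddCommGroup C] [Module R C]
    (hS : IsMultSubset S) (hM : IsUSProjectiveRel S M B) {g : B →ₗ[R] C} (hg : IsUSEpi S g) :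
    ∃ s ∈ S, ∀ h : M →ₗ[R] C, ∃ h' : M →ₗ[R] B, s • h = g ∘ₗ h' := by
  obtain ⟨t, ht, htg⟩ := hg
  obtain ⟨s, hs, hlift⟩ := hM (ker g)
  refine ⟨s * t, hS.2.2 hs ht, fun h => ?_⟩
  -- `t • h` factors through `B ⧸ ker g ≃ range g`; lift that factorization to `B`.
  let h₁ : M →ₗ[R] B ⧸ ker g :=
    g.quotKerEquivRange.symm.toLinearMap ∘ₗ (t • h).codRestrict (range g) fun m => htg (h m)
  have hh₁ : ∀ m, (ker g).liftQ g le_rfl (h₁ m) = t • h m := by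
    intro m
    change (g.quotKerEquivRange (g.quotKerEquivRange.symm _) : C) = _
    rw [LinearEquiv.apply_symm_apply]
    rfl
  obtain ⟨h', hh'⟩ := hlift h₁
  refine ⟨h', LinearMap.ext fun m => ?_⟩
  calc ((s * t) • h) m = (ker g).liftQ g le_rfl (s • h₁ m) := by
        rw [map_smul, hh₁, LinearMap.smul_apply, mul_smul]
    _ = g (h' m) := by rw [← LinearMap.smul_apply, hh']; rfl

theorem IsUSQuasiProjective.isUSProjectiveRel_of_prod {M N : Type v}
    [AddCommGroup M] [Module R M] [AddCommGroup N] [Module R N]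
    (h : IsUSQuasiProjective S (M × N)) : IsUSProjectiveRel S M N := by
  intro K
  -- `(M × N) ⧸ (M × K) ≅ N ⧸ K`, via `β` and its retraction `ρ`.
  let L : Submodule R (M × N) := (⊤ : Submodule R M).prod K
  let β : N ⧸ K →ₗ[R] (M × N) ⧸ L := K.mapQ L (inr R M N) fun n hn => ⟨trivial, hn⟩
  let ρ : (M × N) ⧸ L →ₗ[R] N ⧸ K := L.mapQ K (snd R M N) fun x hx => hx.2
  have hρβ : ∀ y, ρ (β y) = y := by
    rintro ⟨n⟩
    rfl
  have hρ : ∀ x, ρ (Submodule.Quotient.mk x) = Submodule.Quotient.mk x.2 := fun _ => rfl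
  obtain ⟨s, hs, hlift⟩ := h L
  refine ⟨s, hs, fun f => ?_⟩
  obtain ⟨g, hg⟩ := hlift (β ∘ₗ f ∘ₗ fst R M N)
  refine ⟨snd R M N ∘ₗ g ∘ₗ inl R M N, LinearMap.ext fun m => ?_⟩
  have := congrArg ρ (LinearMap.congr_fun hg (m, 0))
  simpa [hρβ, hρ] using this

theorem IsUSProjective.prod (hS : IsMultSubset S) {M N : Type w}
    [AddCommGroup M] [Module R M] [AddCommGroup N] [Module R N]
    (hM : IsUSProjective.{u, v} S M) (hN : IsUSProjective.{u, v} S N) :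
    IsUSProjective.{u, v} S (M × N) := by
  intro B C _ _ _ _ g hg
  obtain ⟨s, hs, hliftM⟩ := hM B C g hg
  obtain ⟨t, ht, hliftN⟩ := hN B C g hg
  refine ⟨s * t, hS.2.2 hs ht, fun h => ?_⟩
  obtain ⟨hM', hhM'⟩ := hliftM (h ∘ₗ inl R M N)
  obtain ⟨hN', hhN'⟩ := hliftN (h ∘ₗ inr R M N)
  refine ⟨(t • hM').coprod (s • hN'), ?_⟩
  apply prod_ext
  · rw [comp_assoc, coprod_inl, comp_smul, ← hhM', smul_comp, smul_smul, mul_comm]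
  · rw [comp_assoc, coprod_inr, comp_smul, ← hhN', smul_comp, smul_smul]

theorem IsUSProjective.of_prod_left {M N : Type w}
    [AddCommGroup M] [Module R M] [AddCommGroup N] [Module R N]
    (h : IsUSProjective.{u, v} S (M × N)) : IsUSProjective.{u, v} S M := by
  intro B C _ _ _ _ g hg
  obtain ⟨s, hs, hlift⟩ := h B C g hg
  refine ⟨s, hs, fun f => ?_⟩
  obtain ⟨f', hf'⟩ := hlift (f ∘ₗ fst R M N)
  refine ⟨f' ∘ₗ inl R M N, ?_⟩
  rw [← comp_assoc, ← hf', smul_comp, comp_assoc, fst_comp_inl, comp_id]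

theorem IsUSProjective.isUSQuasiProjective (h1 : (1 : R) ∈ S) {M : Type v}
    [AddCommGroup M] [Module R M] (h : IsUSProjective.{u, v} S M) :
    IsUSQuasiProjective S M :=
  fun K => h M (M ⧸ K) K.mkQ (isUSEpi_of_surjective_s17 h1 K.mkQ_surjective)

theorem isUSQuasiProjective_of_subsingleton (h1 : (1 : R) ∈ S) (M : Type v)
    [AddCommGroup M] [Module R M] [Subsingleton M] : IsUSQuasiProjective S M :=
  fun _ => ⟨1, h1, fun _ => ⟨0, Subsingleton.elim _ _⟩⟩

theorem isUSQuasiProjective_finsupp_span_singleton (h1 : (1 : R) ∈ S) (ι : Type w)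
    {M : Type v} [AddCommGroup M] [Module R M] (c : M) :
    IsUSQuasiProjective S (ι →₀ R ∙ c) := by
  intro K
  refine ⟨1, h1, fun f => ?_⟩
  have hann : ∀ r : R, r • c = 0 → ∀ y : ι →₀ R ∙ c, r • y = 0 := by
    intro r hr y
    ext j
    obtain ⟨a, ha⟩ := mem_span_singleton.mp (y j).2
    simp [← ha, smul_comm r a, hr]
  let e := Ideal.quotTorsionOfEquivSpanSingleton R M c
  choose x hx using fun i =>
    Submodule.Quotient.mk_surjective K (f (Finsupp.single i ⟨c, mem_span_singleton_self c⟩))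
  -- `R ∙ c ≅ R ⧸ torsionOf c`, and `torsionOf c` kills every `x i`.
  let φ : ι → (R ∙ c) →ₗ[R] ι →₀ R ∙ c := fun i =>
    (Ideal.torsionOf R M c).liftQ (toSpanSingleton R _ (x i))
      (fun r hr => mem_ker.mpr <| hann r ((Ideal.mem_torsionOf_iff c r).mp hr) (x i)) ∘ₗ e.symm
  refine ⟨Finsupp.lsum ℕ φ, Finsupp.lhom_ext fun i y => ?_⟩
  obtain ⟨q, rfl⟩ := e.surjective y
  obtain ⟨a, rfl⟩ := Submodule.Quotient.mk_surjective _ q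
  rw [LinearMap.smul_apply, one_smul, LinearMap.comp_apply, Finsupp.lsum_single,
    LinearMap.comp_apply, LinearEquiv.coe_coe, e.symm_apply_apply, liftQ_apply,
    toSpanSingleton_apply, map_smul, mkQ_apply, hx,
    Ideal.quotTorsionOfEquivSpanSingleton_apply_mk, ← Finsupp.smul_single, map_smul]

theorem exists_isUSQuasiProjective_surjective (h1 : (1 : R) ∈ S) (B : Type v)
    [AddCommGroup B] [Module R B] :
    ∃ (N : Type v) (_ : AddCommGroup N) (_ : Module R N),
      IsUSQuasiProjective S N ∧ ∃ q : N →ₗ[R] B, Function.Surjective q := by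
  -- A free `R`-module need not live in `Type v`; the cyclic `R ∙ id_B ≅ R ⧸ ann B` does.
  let C := R ∙ (LinearMap.id : Module.End R B)
  refine ⟨B →₀ C, _, _, isUSQuasiProjective_finsupp_span_singleton h1 B _,
    Finsupp.lsum ℕ fun b => applyₗ b ∘ₗ C.subtype, fun b => ⟨Finsupp.single b
      ⟨LinearMap.id, mem_span_singleton_self _⟩, by simp⟩⟩

theorem isUSProjective_of_forall_isUSQuasiProjective_prod (hS : IsMultSubset S) {M : Type v}
    [AddCommGroup M] [Module R M]
    (hM : ∀ (N : Type v) [AddCommGroup N] [Module R N],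
      IsUSQuasiProjective S N → IsUSQuasiProjective S (M × N)) :
    IsUSProjective.{u, v} S M := by
  intro B C _ _ _ _ g hg
  obtain ⟨N, _, _, hN, q, hq⟩ := exists_isUSQuasiProjective_surjective hS.1 B
  obtain ⟨s, hs, hlift⟩ :=
    (hM N hN).isUSProjectiveRel_of_prod.exists_lift hS (hg.comp_surjective_s17 hq)
  refine ⟨s, hs, fun h => ?_⟩
  obtain ⟨h', hh'⟩ := hlift h
  exact ⟨q ∘ₗ h', hh'⟩

end

/-- The following are equivalent: (1) every `u`-`S`-quasi-projective module is
`u`-`S`-projective; (2) every direct sum of two `u`-`S`-quasi-projective modules is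
`u`-`S`-projective; (3) every direct sum of two `u`-`S`-quasi-projective modules is
`u`-`S`-quasi-projective. -/
theorem uSQuasiProjective_tfae
    {R : Type u} [CommRing R] (S : Set R) (hS : IsMultSubset S) :
    ((∀ (M : Type v) [AddCommGroup M] [Module R M],
        IsUSQuasiProjective S M → IsUSProjective.{u, v, v} S M) ↔
      (∀ (M N : Type v) [AddCommGroup M] [Module R M] [AddCommGroup N] [Module R N],
        IsUSQuasiProjective S M → IsUSQuasiProjective S N →
          IsUSProjective.{u, v, v} S (M × N))) ∧
    ((∀ (M : Type v) [AddCommGroup M] [Module R M],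
        IsUSQuasiProjective S M → IsUSProjective.{u, v, v} S M) ↔
      (∀ (M N : Type v) [AddCommGroup M] [Module R M] [AddCommGroup N] [Module R N],
        IsUSQuasiProjective S M → IsUSQuasiProjective S N →
          IsUSQuasiProjective S (M × N))) := by
  refine ⟨⟨fun h M N _ _ _ _ hM hN => (h M hM).prod hS (h N hN), fun h M _ _ hM => ?_⟩,
    ⟨fun h M N _ _ _ _ hM hN => ((h M hM).prod hS (h N hN)).isUSQuasiProjective hS.1, ?_⟩⟩
  · exact (h M PUnit hM (isUSQuasiProjective_of_subsingleton hS.1 _)).of_prod_left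
  · exact fun h M _ _ hM =>
      isUSProjective_of_forall_isUSQuasiProjective_prod hS fun N _ _ hN => h M N hM hN
end
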